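/- Let x = x₀ + ι(x̲) and s = s₀ + ι(s̲) be paravectors in the real Clifford algebra ℝ_n with s ∉ [x]. Then both elements x² - 2s₀·x + (s₀² + ‖s̲‖²) and s² - 2x₀·s + (x₀² + ‖x̲‖²) are units in ℝ_n, and the two forms of the right slice monogenic Cauchy kernel agree: (s² - 2x₀·s + (x₀² + ‖x̲‖²))⁻¹·(s - x̄) = -(x - s̄)·(x² - 2s₀·x + (s₀² + ‖s̲‖²))⁻¹. -/

import Mathlib

/-!
A paravector `x = x₀ + a` has a pure part with `a² = -ρ²`, so `x² - 2s₀x + s₀² + σ²` collapses to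
`p + q a` with `p = (x₀ - s₀)² - ρ² + σ²` and `q = 2(x₀ - s₀)`. Such an element lies in a copy of
`ℂ` and is inverted by its conjugate `p - q a`, the norm `p² + q²ρ²` vanishing only when
`x₀ = s₀` and `ρ = σ`, which `s ∉ [x]` excludes. The two kernels then agree because
`(s - x̄)(x² - 2s₀x + |s|²) = (s² - 2x₀s + |x|²)(-(x - s̄))` holds in any real algebra as soon as
the pure parts square to negative scalars.
-/

noncomputable section

open CliffordAlgebra

/-- The quadratic form `Q(v) = -‖v‖²` on `ℝⁿ`, whose Clifford algebra is `ℝ_n`. -/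
def cliffordQ (n : ℕ) : QuadraticForm ℝ (EuclideanSpace ℝ (Fin n)) :=
  -(LinearMap.BilinMap.toQuadraticMap (innerₗ (EuclideanSpace ℝ (Fin n))))

theorem cliffordQ_apply (n : ℕ) (v : EuclideanSpace ℝ (Fin n)) :
    cliffordQ n v = -(‖v‖ ^ 2) := by
  simp [cliffordQ, LinearMap.BilinMap.toQuadraticMap_apply]

theorem ι_mul_self_cliffordQ (n : ℕ) (v : EuclideanSpace ℝ (Fin n)) :
    ι (cliffordQ n) v * ι (cliffordQ n) v = algebraMap ℝ _ (-(‖v‖ ^ 2)) := by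
  rw [ι_sq_scalar, cliffordQ_apply]

theorem eq_zero_and_eq_of_sq_add_sq_mul_sq_eq_zero {α ρ σ : ℝ} (hρ : 0 ≤ ρ) (hσ : 0 ≤ σ)
    (h : (α ^ 2 - ρ ^ 2 + σ ^ 2) ^ 2 + (2 * α) ^ 2 * ρ ^ 2 = 0) : α = 0 ∧ σ = ρ := by
  have hp : α ^ 2 - ρ ^ 2 + σ ^ 2 = 0 := by nlinarith [sq_nonneg (2 * α * ρ)]
  have hq : α * ρ = 0 := by nlinarith [sq_nonneg (α ^ 2 - ρ ^ 2 + σ ^ 2)]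
  rcases mul_eq_zero.1 hq with hα | hρ0
  · subst hα
    exact ⟨rfl, by nlinarith⟩
  · subst hρ0
    exact ⟨by nlinarith [sq_nonneg σ], by nlinarith [sq_nonneg α]⟩

section PureSquareNegative

variable {A : Type*} [Ring A] [Algebra ℝ A] {a b : A} {ρ σ : ℝ}

theorem isUnit_algebraMap_add_smul (ha : a * a = algebraMap ℝ A (-(ρ ^ 2))) {p q : ℝ}
    (hD : p ^ 2 + q ^ 2 * ρ ^ 2 ≠ 0) : IsUnit (algebraMap ℝ A p + q • a) := by
  set D := p ^ 2 + q ^ 2 * ρ ^ 2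
  have hconj : ∀ r : ℝ, (algebraMap ℝ A p + r • a) * (algebraMap ℝ A p - r • a)
      = algebraMap ℝ A (p ^ 2 + r ^ 2 * ρ ^ 2) := by
    intro r
    simp only [Algebra.algebraMap_eq_smul_one] at ha ⊢
    simp only [add_mul, mul_sub, smul_mul_assoc, mul_smul_comm, one_mul, mul_one, ha, smul_smul]
    module
  refine isUnit_iff_exists.2 ⟨D⁻¹ • (algebraMap ℝ A p - q • a), ?_, ?_⟩
  · rw [mul_smul_comm, hconj, Algebra.smul_def, ← map_mul, inv_mul_cancel₀ hD, map_one]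
  · have h := hconj (-q)
    rw [neg_smul, sub_neg_eq_add, ← sub_eq_add_neg, neg_sq] at h
    rw [smul_mul_assoc, h, Algebra.smul_def, ← map_mul, inv_mul_cancel₀ hD, map_one]

theorem paravector_quadratic_eq (ha : a * a = algebraMap ℝ A (-(ρ ^ 2))) (x₀ s₀ : ℝ) :
    (algebraMap ℝ A x₀ + a) ^ 2 - (2 * s₀) • (algebraMap ℝ A x₀ + a)
        + algebraMap ℝ A (s₀ ^ 2 + σ ^ 2)
      = algebraMap ℝ A ((x₀ - s₀) ^ 2 - ρ ^ 2 + σ ^ 2) + (2 * (x₀ - s₀)) • a := by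
  simp only [Algebra.algebraMap_eq_smul_one] at ha ⊢
  simp only [sq, add_mul, mul_add, smul_mul_assoc, mul_smul_comm, one_mul, mul_one, ha]
  module

theorem isUnit_paravector_quadratic (ha : a * a = algebraMap ℝ A (-(ρ ^ 2)))
    (hρ : 0 ≤ ρ) (hσ : 0 ≤ σ) {x₀ s₀ : ℝ} (hsx : (s₀, σ) ≠ (x₀, ρ)) :
    IsUnit ((algebraMap ℝ A x₀ + a) ^ 2 - (2 * s₀) • (algebraMap ℝ A x₀ + a)
      + algebraMap ℝ A (s₀ ^ 2 + σ ^ 2)) := by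
  rw [paravector_quadratic_eq ha]
  refine isUnit_algebraMap_add_smul ha fun hD => hsx ?_
  obtain ⟨hx, hσρ⟩ := eq_zero_and_eq_of_sq_add_sq_mul_sq_eq_zero hρ hσ hD
  rw [sub_eq_zero.1 hx, hσρ]

theorem paravector_cauchy_identity (ha : a * a = algebraMap ℝ A (-(ρ ^ 2)))
    (hb : b * b = algebraMap ℝ A (-(σ ^ 2))) (x₀ s₀ : ℝ) :
    (algebraMap ℝ A s₀ + b - (algebraMap ℝ A x₀ - a)) *
        ((algebraMap ℝ A x₀ + a) ^ 2 - (2 * s₀) • (algebraMap ℝ A x₀ + a)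
          + algebraMap ℝ A (s₀ ^ 2 + σ ^ 2))
      = ((algebraMap ℝ A s₀ + b) ^ 2 - (2 * x₀) • (algebraMap ℝ A s₀ + b)
          + algebraMap ℝ A (x₀ ^ 2 + ρ ^ 2)) *
        -(algebraMap ℝ A x₀ + a - (algebraMap ℝ A s₀ - b)) := by
  simp only [Algebra.algebraMap_eq_smul_one] at ha hb ⊢
  simp only [sq, add_mul, mul_add, sub_mul, mul_sub, smul_mul_assoc, mul_smul_comm,
    mul_neg, one_mul, mul_one, ha, hb, smul_smul, neg_sub]
  module

end PureSquareNegative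

theorem Ring.inverse_mul_eq_mul_inverse_of_mul_eq {R : Type*} [MonoidWithZero R] {u v A B : R}
    (hA : IsUnit A) (hB : IsUnit B) (h : u * A = B * v) :
    Ring.inverse B * u = v * Ring.inverse A := by
  obtain ⟨A, rfl⟩ := hA
  obtain ⟨B, rfl⟩ := hB
  rw [Ring.inverse_unit, Ring.inverse_unit, Units.inv_mul_eq_iff_eq_mul, ← mul_assoc,
    Units.eq_mul_inv_iff_mul_eq, h]

theorem right_cauchy_kernel_two_forms_general (n : ℕ)
    (x₀ s₀ : ℝ) (xv sv : EuclideanSpace ℝ (Fin n))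
    (hsx : (s₀, ‖sv‖) ≠ (x₀, ‖xv‖)) :
    let ιQ := CliffordAlgebra.ι (cliffordQ n)
    let x : CliffordAlgebra (cliffordQ n) := algebraMap ℝ _ x₀ + ιQ xv
    let s : CliffordAlgebra (cliffordQ n) := algebraMap ℝ _ s₀ + ιQ sv
    let xbar : CliffordAlgebra (cliffordQ n) := algebraMap ℝ _ x₀ - ιQ xv
    let sbar : CliffordAlgebra (cliffordQ n) := algebraMap ℝ _ s₀ - ιQ sv
    let A : CliffordAlgebra (cliffordQ n) :=
      x ^ 2 - (2 * s₀) • x + algebraMap ℝ _ (s₀ ^ 2 + ‖sv‖ ^ 2)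
    let B : CliffordAlgebra (cliffordQ n) :=
      s ^ 2 - (2 * x₀) • s + algebraMap ℝ _ (x₀ ^ 2 + ‖xv‖ ^ 2)
    IsUnit A ∧ IsUnit B ∧
      Ring.inverse B * (s - xbar) = -((x - sbar) * Ring.inverse A) := by
  intro ιQ x s xbar sbar A B
  have ha := ι_mul_self_cliffordQ n xv
  have hb := ι_mul_self_cliffordQ n sv
  have hA : IsUnit A := isUnit_paravector_quadratic ha (norm_nonneg _) (norm_nonneg _) hsx
  have hB : IsUnit B := isUnit_paravector_quadratic hb (norm_nonneg _) (norm_nonneg _) hsx.symm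
  refine ⟨hA, hB, ?_⟩
  rw [← neg_mul]
  exact Ring.inverse_mul_eq_mul_inverse_of_mul_eq hA hB
    (paravector_cauchy_identity ha hb x₀ s₀)

/-- For paravectors `x = x₀ + ι x̲` and `s = s₀ + ι s̲` in the real Clifford
algebra `ℝ_n` with `s ∉ [x]`, both `x² - 2s₀·x + (s₀² + ‖s̲‖²)` and
`s² - 2x₀·s + (x₀² + ‖x̲‖²)` are units, and the two forms of the right slice monogenic Cauchy
kernel agree:
`(s² - 2x₀·s + (x₀² + ‖x̲‖²))⁻¹ · (s - x̄) = -(x - s̄) · (x² - 2s₀·x + (s₀² + ‖s̲‖²))⁻¹`. -/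
theorem right_cauchy_kernel_two_forms (n : ℕ) (hn : 1 ≤ n)
    (x₀ s₀ : ℝ) (xv sv : EuclideanSpace ℝ (Fin n))
    (hsx : (s₀, ‖sv‖) ≠ (x₀, ‖xv‖)) :
    let ιQ := CliffordAlgebra.ι (cliffordQ n)
    let x : CliffordAlgebra (cliffordQ n) := algebraMap ℝ _ x₀ + ιQ xv
    let s : CliffordAlgebra (cliffordQ n) := algebraMap ℝ _ s₀ + ιQ sv
    let xbar : CliffordAlgebra (cliffordQ n) := algebraMap ℝ _ x₀ - ιQ xv
    let sbar : CliffordAlgebra (cliffordQ n) := algebraMap ℝ _ s₀ - ιQ sv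
    let A : CliffordAlgebra (cliffordQ n) :=
      x ^ 2 - (2 * s₀) • x + algebraMap ℝ _ (s₀ ^ 2 + ‖sv‖ ^ 2)
    let B : CliffordAlgebra (cliffordQ n) :=
      s ^ 2 - (2 * x₀) • s + algebraMap ℝ _ (x₀ ^ 2 + ‖xv‖ ^ 2)
    IsUnit A ∧ IsUnit B ∧
      Ring.inverse B * (s - xbar) = -((x - sbar) * Ring.inverse A) :=
  right_cauchy_kernel_two_forms_general n x₀ s₀ xv sv hsx
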